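/- arXiv:2407.01184 — 2 statements merged into one kernel-verified Lean document; each statement's English description precedes it below -/
import Mathlib

section
/- Let d ≥ 1, let σ∥ and v (the tangential traction and the increment of the tangential displacement jump) be vectors in the Euclidean space ℝ^d, let b > 0 (the friction bound) and c > 0 be real numbers. Define the tangential complementarity function C∥ = σ∥ · max(b, ‖σ∥ + c·v‖) - b·(σ∥ + c·v) (a vector in ℝ^d, where the first term is scalar multiplication). Then C∥ = 0 if and only if either (stick) v = 0 and ‖σ∥‖ ≤ b, or (slip) v ≠ 0 and σ∥ = (b/‖v‖)·v. -/
/-!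
Writing `w = σ + c v`, the equation `C∥ = 0` says `σ = (b / max b ‖w‖) w`, i.e. `σ` is the radial
retraction of `w` onto the closed ball of radius `b`. If `‖w‖ ≤ b` the retraction fixes `w`,
forcing `c v = 0`: stick. If `‖w‖ > b` it sends `w` to `b w / ‖w‖`, and then
`c v = w - σ = (1 - b / ‖w‖) w` is a nonzero positive multiple of `w`, so `v` points in the
direction of `w` and `σ = b v / ‖v‖`: slip.
-/

section RadialRetraction

variable {E : Type*} [NormedAddCommGroup E] [NormedSpace ℝ E]

noncomputable def radialRetraction (b : ℝ) (w : E) : E := (b / max b ‖w‖) • w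

theorem div_norm_smul_eq_smul_normalize (b : ℝ) (x : E) :
    (b / ‖x‖) • x = b • NormedSpace.normalize x := by
  rw [NormedSpace.normalize, smul_smul, div_eq_mul_inv]

theorem radialRetraction_of_norm_le {b : ℝ} {w : E} (hw : ‖w‖ ≤ b) :
    radialRetraction b w = w := by
  rcases eq_or_ne b 0 with rfl | hb
  · simp [radialRetraction, norm_le_zero_iff.mp hw]
  · rw [radialRetraction, max_eq_left hw, div_self hb, one_smul]

theorem radialRetraction_of_le_norm {b : ℝ} {w : E} (hw : b ≤ ‖w‖) :
    radialRetraction b w = b • NormedSpace.normalize w := by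
  rw [radialRetraction, max_eq_right hw, div_norm_smul_eq_smul_normalize]

theorem max_smul_sub_smul_eq_zero_iff {b : ℝ} (hb : 0 < b) (σ w : E) :
    max b ‖w‖ • σ - b • w = 0 ↔ σ = radialRetraction b w := by
  have hm : max b ‖w‖ ≠ 0 := (hb.trans_le (le_max_left _ _)).ne'
  rw [sub_eq_zero, radialRetraction, div_eq_inv_mul, ← smul_smul, eq_inv_smul_iff₀ hm]

theorem eq_radialRetraction_add_iff {b : ℝ} (hb : 0 < b) (σ u : E) :
    σ = radialRetraction b (σ + u) ↔
      (u = 0 ∧ ‖σ‖ ≤ b) ∨ (u ≠ 0 ∧ σ = b • NormedSpace.normalize u) := by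
  constructor
  · intro h
    rcases le_or_gt ‖σ + u‖ b with hw | hw
    · rw [radialRetraction_of_norm_le hw, left_eq_add] at h
      subst h
      simpa using hw
    · set w := σ + u
      have hσ : σ = (b / ‖w‖) • w := by
        rw [h, radialRetraction_of_le_norm hw.le, div_norm_smul_eq_smul_normalize]
      have ht : 0 < 1 - b / ‖w‖ := by
        rw [sub_pos, div_lt_one (hb.trans hw)]
        exact hw
      have hu : u = (1 - b / ‖w‖) • w := by
        rw [sub_smul, one_smul, ← hσ]
        exact (add_sub_cancel_left σ u).symm
      have hw0 : w ≠ 0 := norm_pos_iff.mp (hb.trans hw)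
      refine Or.inr ⟨hu ▸ smul_ne_zero ht.ne' hw0, ?_⟩
      rw [hσ, hu, NormedSpace.normalize_smul_of_pos ht, div_norm_smul_eq_smul_normalize]
  · rintro (⟨rfl, hσ⟩ | ⟨hu, rfl⟩)
    · rw [add_zero, radialRetraction_of_norm_le hσ]
    · have hu' : 0 < ‖u‖ := norm_pos_iff.mpr hu
      have ht : 0 < b / ‖u‖ + 1 := by positivity
      have hw : b • NormedSpace.normalize u + u = (b / ‖u‖ + 1) • u := by
        rw [add_smul, one_smul, div_norm_smul_eq_smul_normalize]
      have hnorm : ‖b • NormedSpace.normalize u + u‖ = b + ‖u‖ := by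
        rw [hw, norm_smul, Real.norm_of_nonneg ht.le]
        field_simp
      rw [radialRetraction_of_le_norm (by rw [hnorm]; linarith), hw,
        NormedSpace.normalize_smul_of_pos ht]

end RadialRetraction

theorem tangential_complementarity_iff_stick_or_slip_general
    (d : ℕ) (σ v : EuclideanSpace ℝ (Fin d)) (b c : ℝ)
    (hb : 0 < b) (hc : 0 < c) :
    (max b ‖σ + c • v‖) • σ - b • (σ + c • v) = 0 ↔
      (v = 0 ∧ ‖σ‖ ≤ b) ∨ (v ≠ 0 ∧ σ = (b / ‖v‖) • v) := by
  rw [max_smul_sub_smul_eq_zero_iff hb, eq_radialRetraction_add_iff hb, ne_eq,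
    smul_eq_zero_iff_right hc.ne', NormedSpace.normalize_smul_of_pos hc,
    div_norm_smul_eq_smul_normalize]

/-- The tangential complementarity function
`C∥ = max(b, ‖σ∥ + c v‖) • σ∥ - b • (σ∥ + c v)` vanishes iff the fracture cell
is sticking (`v = 0` and `‖σ∥‖ ≤ b`) or slipping (`v ≠ 0` and
`σ∥ = (b/‖v‖) • v`). -/
theorem tangential_complementarity_iff_stick_or_slip
    (d : ℕ) (hd : 1 ≤ d) (σ v : EuclideanSpace ℝ (Fin d)) (b c : ℝ)
    (hb : 0 < b) (hc : 0 < c) :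
    (max b ‖σ + c • v‖) • σ - b • (σ + c • v) = 0 ↔
      (v = 0 ∧ ‖σ‖ ≤ b) ∨ (v ≠ 0 ∧ σ = (b / ‖v‖) • v) :=
  tangential_complementarity_iff_stick_or_slip_general d σ v b c hb hc
end

section
/- Let d ≥ 1, c > 0, F > 0 (friction coefficient), and let σ⊥, u⊥, g ∈ ℝ and σ∥, v ∈ ℝ^d. Set the friction bound b = -F·σ⊥ and suppose the normal condition -σ⊥ - max(0, -σ⊥ - c·(u⊥ - g)) = 0 holds, together with the tangential condition: if b ≤ 0 then σ∥ = 0, and if b > 0 then σ∥ · max(b, ‖σ∥ + c·v‖) - b·(σ∥ + c·v) = 0. Then the fracture cell is in exactly one of the following states: (open) σ⊥ = 0 and σ∥ = 0; (sticking) σ⊥ < 0, u⊥ = g, v = 0 and ‖σ∥‖ ≤ -F·σ⊥; or (sliding) σ⊥ < 0, u⊥ = g, v ≠ 0 and σ∥ = (-F·σ⊥/‖v‖)·v. -/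
/-!
The normal condition is the Signorini complementarity `σ⊥ ≤ 0 ≤ u⊥ - g`, `σ⊥ (u⊥ - g) = 0`, so
either `σ⊥ = 0` (open) or the cell is in contact with `u⊥ = g` and `b > 0`. In contact, the
tangential condition reads `(M - b) σ∥ = b c v` with `M = max b ‖σ∥ + c v‖`. For `v = 0` it gives
`‖σ∥‖ ≤ b`; for `v ≠ 0` it forces `M = ‖σ∥ + c v‖ > b`, and taking norms in
`(M - b) (σ∥ + c v) = M c v` gives `M - b = c ‖v‖`, whence `σ∥ = (b / ‖v‖) v`.
-/

theorem signorini_of_normal_complementarity {c σn un g : ℝ} (hc : 0 < c)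
    (h : -σn - max 0 (-σn - c * (un - g)) = 0) :
    σn ≤ 0 ∧ g ≤ un ∧ σn * (un - g) = 0 := by
  rcases max_cases 0 (-σn - c * (un - g)) with ⟨hmax, hle⟩ | ⟨hmax, hlt⟩
  · have hσn : σn = 0 := by linarith
    have hgap : 0 ≤ c * (un - g) := by linarith
    exact ⟨hσn.le, by linarith [nonneg_of_mul_nonneg_right hgap hc], by simp [hσn]⟩
  · have hgap : un - g = 0 := by
      have : c * (un - g) = 0 := by linarith
      exact (mul_eq_zero.mp this).resolve_left hc.ne'
    exact ⟨by linarith, by linarith, by simp [hgap]⟩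

section Coulomb

variable {E : Type*} [NormedAddCommGroup E] [NormedSpace ℝ E]

theorem coulomb_stick_norm_le {b : ℝ} {σ : E} (hb : 0 ≤ b)
    (h : (max b ‖σ‖) • σ - b • σ = 0) : ‖σ‖ ≤ b := by
  rw [← sub_smul, smul_eq_zero, sub_eq_zero, max_eq_left_iff] at h
  rcases h with h | rfl
  · exact h
  · simpa using hb

theorem coulomb_slip_eq_smul {b c : ℝ} {σ v : E} (hb : 0 < b) (hc : 0 < c) (hv : v ≠ 0)
    (h : (max b ‖σ + c • v‖) • σ - b • (σ + c • v) = 0) :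
    σ = (b / ‖v‖) • v := by
  set M := max b ‖σ + c • v‖
  have hkey : (M - b) • σ = (b * c) • v := by
    rw [sub_smul, mul_smul, ← sub_eq_zero, ← h, smul_add]
    abel
  have hbM : b < M := by
    refine (le_max_left _ _).lt_of_ne fun hMb : b = M => hv ?_
    rw [← hMb, sub_self, zero_smul, eq_comm, smul_eq_zero] at hkey
    exact hkey.resolve_left (mul_pos hb hc).ne'
  have hM : M = ‖σ + c • v‖ :=
    max_eq_right ((lt_max_iff.mp hbM).resolve_left (lt_irrefl b)).le
  have hgap : M - b = c * ‖v‖ := by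
    have hsum : (M - b) • (σ + c • v) = (M * c) • v := by
      rw [smul_add, hkey, smul_smul, ← add_smul]
      ring_nf
    have hM0 : 0 < M := hb.trans hbM
    have hnorm := congrArg norm hsum
    rw [norm_smul, norm_smul, ← hM, Real.norm_of_nonneg (sub_pos.2 hbM).le,
      Real.norm_of_nonneg (mul_pos hM0 hc).le] at hnorm
    apply mul_left_cancel₀ hM0.ne'
    linarith
  rw [← inv_smul_smul₀ (sub_pos.2 hbM).ne' σ, hkey, hgap, smul_smul]
  have hv0 : ‖v‖ ≠ 0 := norm_ne_zero_iff.mpr hv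
  congr 1
  field_simp

end Coulomb

theorem fracture_cell_trichotomy_general
    (d : ℕ) (c F : ℝ) (hc : 0 < c) (hF : 0 < F)
    (σn un g : ℝ) (σt v : EuclideanSpace ℝ (Fin d))
    (hnormal : -σn - max 0 (-σn - c * (un - g)) = 0)
    (htang_open : -F * σn ≤ 0 → σt = 0)
    (htang_closed : 0 < -F * σn →
      (max (-F * σn) ‖σt + c • v‖) • σt - (-F * σn) • (σt + c • v) = 0) :
    ((σn = 0 ∧ σt = 0) ∨
      (σn < 0 ∧ un = g ∧ v = 0 ∧ ‖σt‖ ≤ -F * σn) ∨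
      (σn < 0 ∧ un = g ∧ v ≠ 0 ∧ σt = (-F * σn / ‖v‖) • v)) ∧
    ¬((σn = 0 ∧ σt = 0) ∧
        (σn < 0 ∧ un = g ∧ v = 0 ∧ ‖σt‖ ≤ -F * σn)) ∧
    ¬((σn = 0 ∧ σt = 0) ∧
        (σn < 0 ∧ un = g ∧ v ≠ 0 ∧ σt = (-F * σn / ‖v‖) • v)) ∧
    ¬((σn < 0 ∧ un = g ∧ v = 0 ∧ ‖σt‖ ≤ -F * σn) ∧
        (σn < 0 ∧ un = g ∧ v ≠ 0 ∧ σt = (-F * σn / ‖v‖) • v)) := by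
  refine ⟨?_, fun ⟨⟨h0, _⟩, hneg, _⟩ => hneg.ne h0, fun ⟨⟨h0, _⟩, hneg, _⟩ => hneg.ne h0,
    fun ⟨⟨_, _, hv0, _⟩, _, _, hv, _⟩ => hv hv0⟩
  obtain ⟨hσn, -, hcompl⟩ := signorini_of_normal_complementarity hc hnormal
  rcases hσn.eq_or_lt with hopen | hneg
  · exact Or.inl ⟨hopen, htang_open (by simp [hopen])⟩
  have hug : un = g := sub_eq_zero.mp ((mul_eq_zero.mp hcompl).resolve_left hneg.ne)
  have hb : 0 < -F * σn := by nlinarith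
  right
  by_cases hv : v = 0
  · subst hv
    have htang := htang_closed hb
    simp only [smul_zero, add_zero] at htang
    exact Or.inl ⟨hneg, hug, rfl, coulomb_stick_norm_le hb.le htang⟩
  · exact Or.inr ⟨hneg, hug, hv, coulomb_slip_eq_smul hb hc hv (htang_closed hb)⟩

/-- Under the normal and tangential complementarity conditions with friction
bound `b = -F σ⊥`, a fracture cell is in exactly one of the states: open,
sticking, or sliding. -/
theorem fracture_cell_trichotomy
    (d : ℕ) (hd : 1 ≤ d) (c F : ℝ) (hc : 0 < c) (hF : 0 < F)
    (σn un g : ℝ) (σt v : EuclideanSpace ℝ (Fin d))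
    (hnormal : -σn - max 0 (-σn - c * (un - g)) = 0)
    (htang_open : -F * σn ≤ 0 → σt = 0)
    (htang_closed : 0 < -F * σn →
      (max (-F * σn) ‖σt + c • v‖) • σt - (-F * σn) • (σt + c • v) = 0) :
    ((σn = 0 ∧ σt = 0) ∨
      (σn < 0 ∧ un = g ∧ v = 0 ∧ ‖σt‖ ≤ -F * σn) ∨
      (σn < 0 ∧ un = g ∧ v ≠ 0 ∧ σt = (-F * σn / ‖v‖) • v)) ∧
    ¬((σn = 0 ∧ σt = 0) ∧
        (σn < 0 ∧ un = g ∧ v = 0 ∧ ‖σt‖ ≤ -F * σn)) ∧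
    ¬((σn = 0 ∧ σt = 0) ∧
        (σn < 0 ∧ un = g ∧ v ≠ 0 ∧ σt = (-F * σn / ‖v‖) • v)) ∧
    ¬((σn < 0 ∧ un = g ∧ v = 0 ∧ ‖σt‖ ≤ -F * σn) ∧
        (σn < 0 ∧ un = g ∧ v ≠ 0 ∧ σt = (-F * σn / ‖v‖) • v)) :=
  fracture_cell_trichotomy_general d c F hc hF σn un g σt v hnormal htang_open htang_closed
end
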